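/- arXiv:2201.09771 — 2 statements merged into one kernel-verified Lean document; each statement's English description precedes it below -/
import Mathlib

section
/- Let g_r(z) := |z|^r for z ∈ ℝⁿ with r ≥ 2. Then there exists a constant c = c(r,n) > 0 such that for all z₁, z₂ ∈ ℝⁿ, c|V_r(z₁) - V_r(z₂)|² ≤ g_r(z₁) - g_r(z₂) - ⟨∇g_r(z₂), z₁ - z₂⟩, where V_r(z) = |z|^((r-2)/2) z. -/
/-! Write a = ‖z₁‖, b = ‖z₂‖, α = a ^ ((r - 2) / 2), β = b ^ ((r - 2) / 2) and t = ⟪z₁, z₂⟫.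
Then ‖z₁‖ ^ r = α²a², ‖z₂‖ ^ (r - 2) = β², and with c = 1/2 the right-hand side minus the left is
α²a²/2 + (r - 3/2) β²b² + (αβ - rβ²) t, which is affine in t ∈ [-ab, ab]. At t = -ab it is
(αa - βb)²/2 + (r - 2) β²b² + rβ²ab ≥ 0. At t = ab, Young's inequality for the exponent r/2
(the tangent-line inequality for the convex function x ↦ x ^ (r/2)),
(r/2) a b^(r/2 - 1) ≤ a^(r/2) + (r/2 - 1) b^(r/2), multiplied by 2βb, leaves (αa - βb)²/2 ≥ 0. -/

open scoped RealInnerProductSpace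

theorem Real.mul_mul_rpow_sub_one_le {x y p : ℝ} (hx : 0 ≤ x) (hy : 0 ≤ y) (hp : 1 ≤ p) :
    p * (x * y ^ (p - 1)) ≤ x ^ p + (p - 1) * y ^ p := by
  have hp0 : p ≠ 0 := by linarith
  have h := Real.geom_mean_le_arith_mean2_weighted (p₁ := x ^ p) (p₂ := y ^ p)
    (inv_nonneg.2 (by linarith : 0 ≤ p)) (sub_nonneg.2 (inv_le_one_of_one_le₀ hp))
    (Real.rpow_nonneg hx p) (Real.rpow_nonneg hy p) (add_sub_cancel _ _)
  rw [Real.rpow_rpow_inv hx hp0, ← Real.rpow_mul hy, mul_sub, mul_one, mul_inv_cancel₀ hp0] at h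
  calc p * (x * y ^ (p - 1)) ≤ p * (p⁻¹ * x ^ p + (1 - p⁻¹) * y ^ p) := by gcongr
    _ = x ^ p + (p - 1) * y ^ p := by field_simp

theorem half_norm_smul_sub_smul_sq_le {E : Type*} [NormedAddCommGroup E] [InnerProductSpace ℝ E]
    {r α β : ℝ} {u v : E} (hr : 2 ≤ r) (hα : 0 ≤ α) (hβ : 0 ≤ β)
    (hyoung : r / 2 * (‖u‖ * β) ≤ α * ‖u‖ + (r - 2) / 2 * (β * ‖v‖)) :
    1 / 2 * ‖α • u - β • v‖ ^ 2 ≤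
      α ^ 2 * ‖u‖ ^ 2 - β ^ 2 * ‖v‖ ^ 2 - ⟪(r * β ^ 2) • v, u - v⟫ := by
  rw [norm_sub_sq_real, norm_smul, norm_smul, Real.norm_of_nonneg hα, Real.norm_of_nonneg hβ,
    real_inner_smul_left, real_inner_smul_right, real_inner_smul_left, inner_sub_right,
    real_inner_self_eq_norm_sq, real_inner_comm v u]
  obtain ⟨hlo, hhi⟩ := abs_le.1 (abs_real_inner_le_norm v u)
  have hu := norm_nonneg u
  have hv := norm_nonneg v
  rcases le_total 0 (α * β - r * β ^ 2) with hk | hk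
  · nlinarith [mul_nonneg hk (by linarith : 0 ≤ ⟪v, u⟫ + ‖u‖ * ‖v‖),
      sq_nonneg (α * ‖u‖ - β * ‖v‖), mul_nonneg (mul_nonneg hu hv) (sq_nonneg β),
      mul_nonneg (by linarith : 0 ≤ r - 2) (sq_nonneg (β * ‖v‖))]
  · nlinarith [mul_nonneg_of_nonpos_of_nonpos hk (by linarith : ⟪v, u⟫ - ‖u‖ * ‖v‖ ≤ 0),
      sq_nonneg (α * ‖u‖ - β * ‖v‖), mul_le_mul_of_nonneg_left hyoung (mul_nonneg hβ hv)]

theorem half_norm_rpow_smul_sub_sq_le {E : Type*} [NormedAddCommGroup E]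
    [InnerProductSpace ℝ E] {r : ℝ} (hr : 2 ≤ r) (z₁ z₂ : E) :
    1 / 2 * ‖(‖z₁‖ ^ ((r - 2) / 2)) • z₁ - (‖z₂‖ ^ ((r - 2) / 2)) • z₂‖ ^ 2 ≤
      ‖z₁‖ ^ r - ‖z₂‖ ^ r - ⟪(r * ‖z₂‖ ^ (r - 2)) • z₂, z₁ - z₂⟫ := by
  have hsq {x : ℝ} (hx : 0 ≤ x) : x ^ (r - 2) = (x ^ ((r - 2) / 2)) ^ 2 := by
    rw [← Real.rpow_mul_natCast hx]; ring_nf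
  have hpow {x : ℝ} (hx : 0 ≤ x) : x ^ r = (x ^ ((r - 2) / 2)) ^ 2 * x ^ 2 := by
    rw [← hsq hx, ← Real.rpow_two, ← Real.rpow_add' hx (by linarith), sub_add_cancel]
  have hhalf {x : ℝ} (hx : 0 ≤ x) : x ^ (r / 2) = x ^ ((r - 2) / 2) * x := by
    rw [← Real.rpow_add_one' hx (by linarith)]; ring_nf
  have hyoung := Real.mul_mul_rpow_sub_one_le (norm_nonneg z₁) (norm_nonneg z₂)
    (p := r / 2) (by linarith)
  rw [hhalf (norm_nonneg _), hhalf (norm_nonneg _), show r / 2 - 1 = (r - 2) / 2 by ring]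
    at hyoung
  rw [hpow (norm_nonneg z₁), hpow (norm_nonneg z₂), hsq (norm_nonneg z₂)]
  exact half_norm_smul_sub_smul_sq_le hr (by positivity) (by positivity) hyoung

theorem stmt_8 (n : ℕ) (r : ℝ) (hr : 2 ≤ r) :
    ∃ c > 0, ∀ z₁ z₂ : EuclideanSpace ℝ (Fin n),
      c * ‖(‖z₁‖ ^ ((r - 2) / 2)) • z₁ - (‖z₂‖ ^ ((r - 2) / 2)) • z₂‖ ^ 2 ≤
        ‖z₁‖ ^ r - ‖z₂‖ ^ r - ⟪(r * ‖z₂‖ ^ (r - 2)) • z₂, z₁ - z₂⟫ :=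
  ⟨1 / 2, one_half_pos, fun z₁ z₂ => half_norm_rpow_smul_sub_sq_le hr z₁ z₂⟩
end

section
/- Let σ ∈ (0,1), α ∈ (0,1), and let p̃₁ > κ₁ > 1 be real numbers. Define σ̃ := (σ + 2p̃₁ - √((σ + 2p̃₁)² - 4κ₁ασ))/(4κ₁) and σ_α := ασ/(2(σ + 2p̃₁)). Then σ_α < σ̃ < ασ/(2p̃₁). -/
/-! Rationalising, `S - √(S² - 4c) = 4c / (S + √(S² - 4c))` with `S = σ + 2p̃₁` and
`c = κ₁ασ`, so `σ̃ = ασ / (S + √(S² - 4c))`. As `0 ≤ √(S² - 4c) < S`, this lies in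
`(ασ / (2S), ασ / S]`, and `ασ / S < ασ / (2p̃₁)` because `S > 2p̃₁`. -/

namespace Real

variable {S c : ℝ}

lemma sub_sqrt_sq_sub_four_mul_mul_add (h : 4 * c ≤ S ^ 2) :
    (S - √(S ^ 2 - 4 * c)) * (S + √(S ^ 2 - 4 * c)) = 4 * c := by
  have := sq_sqrt (sub_nonneg.2 h)
  linear_combination -this

lemma sqrt_sq_sub_four_mul_lt (hS : 0 < S) (hc : 0 < c) : √(S ^ 2 - 4 * c) < S :=
  (sqrt_lt' hS).2 (by linarith)

lemma two_mul_div_lt_sub_sqrt_sq_sub_four_mul (hS : 0 < S) (hc : 0 < c) (h : 4 * c ≤ S ^ 2) :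
    2 * c / S < S - √(S ^ 2 - 4 * c) := by
  have hprod := sub_sqrt_sq_sub_four_mul_mul_add h
  have hlt := sqrt_sq_sub_four_mul_lt hS hc
  rw [div_lt_iff₀ hS]
  nlinarith

lemma sub_sqrt_sq_sub_four_mul_le_four_mul_div (hS : 0 < S) (hc : 0 ≤ c) (h : 4 * c ≤ S ^ 2) :
    S - √(S ^ 2 - 4 * c) ≤ 4 * c / S := by
  have hprod := sub_sqrt_sq_sub_four_mul_mul_add h
  have hnn := sqrt_nonneg (S ^ 2 - 4 * c)
  have hle : √(S ^ 2 - 4 * c) ≤ S := (sqrt_le_left hS.le).2 (by linarith)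
  rw [le_div_iff₀ hS]
  nlinarith

end Real

theorem stmt_12 (σ α p₁ κ₁ : ℝ) (hσ : σ ∈ Set.Ioo (0 : ℝ) 1) (hα : α ∈ Set.Ioo (0 : ℝ) 1)
    (hκ : 1 < κ₁) (hp : κ₁ < p₁) :
    α * σ / (2 * (σ + 2 * p₁)) <
      (σ + 2 * p₁ - Real.sqrt ((σ + 2 * p₁) ^ 2 - 4 * κ₁ * α * σ)) / (4 * κ₁) ∧
    (σ + 2 * p₁ - Real.sqrt ((σ + 2 * p₁) ^ 2 - 4 * κ₁ * α * σ)) / (4 * κ₁) <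
      α * σ / (2 * p₁) := by
  obtain ⟨hσ0, -⟩ := hσ
  obtain ⟨hα0, hα1⟩ := hα
  have hκ0 : 0 < κ₁ := by linarith
  have hS : 0 < σ + 2 * p₁ := by linarith
  have hc : 0 < κ₁ * α * σ := by positivity
  -- `(σ + 2p̃₁)² ≥ 8p̃₁σ` by AM-GM, and `2p̃₁ > κ₁ > κ₁α`
  have hdisc : 4 * (κ₁ * α * σ) ≤ (σ + 2 * p₁) ^ 2 := by
    nlinarith [sq_nonneg (σ - 2 * p₁), mul_lt_mul_of_pos_left hα1 hκ0]
  rw [show 4 * κ₁ * α * σ = 4 * (κ₁ * α * σ) by ring]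
  constructor
  · calc α * σ / (2 * (σ + 2 * p₁)) = 2 * (κ₁ * α * σ) / (σ + 2 * p₁) / (4 * κ₁) := by
          field_simp; ring
      _ < _ := by gcongr; exact Real.two_mul_div_lt_sub_sqrt_sq_sub_four_mul hS hc hdisc
  · calc _ ≤ 4 * (κ₁ * α * σ) / (σ + 2 * p₁) / (4 * κ₁) := by
          gcongr; exact Real.sub_sqrt_sq_sub_four_mul_le_four_mul_div hS hc.le hdisc
      _ = α * σ / (σ + 2 * p₁) := by field_simp
      _ < α * σ / (2 * p₁) := by gcongr <;> linarith
end
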